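/- arXiv:1202.6095 — 2 statements merged into one kernel-verified Lean document; each statement's English description precedes it below -/
import Mathlib

section
/- Fix an integer t ≥ 2. For every sequence of integers (i_n) indexed by n with t ≤ i_n ≤ n−1 for each n, the miscorrection-adjusted failure probability for the even-weight subcode satisfies lim_{n→∞} P̃_n(i_n) = 1. -/
open Finset Filter

/-- `ℓ(i,δ,j) = i − δ + 2j + 1` (natural subtraction; the defining ranges guarantee
`i ≥ δ` wherever this is used). -/
def ell (i δ j : ℕ) : ℕ := i - δ + 2 * j + 1

/-- `V(n,i,δ,j) = C(ℓ, ℓ−j)·C(n−ℓ−1, δ−1−j)/C(n−1,i)`. -/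
noncomputable def V (n i δ j : ℕ) : ℝ :=
  (Nat.choose (ell i δ j) (ell i δ j - j) : ℝ) *
    (Nat.choose (n - ell i δ j - 1) (δ - 1 - j) : ℝ) / (Nat.choose (n - 1) i : ℝ)

/-- Binomial approximation `Â_l = (n+1)^{−t}·C(n,l)`. -/
noncomputable def Ahat (t n l : ℕ) : ℝ :=
  ((n : ℝ) + 1) ^ (-(t : ℤ)) * (Nat.choose n l : ℝ)

/-- Approximate weight distribution of the even-weight subcode:
`Ã_l = (n+1)^{−t}·C(n,l)` for even `l`, and `Ã_l = 0` for odd `l`. -/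
noncomputable def Atil (t n l : ℕ) : ℝ :=
  if l % 2 = 0 then Ahat t n l else 0

/-- `P̃_n(i)`: probability that a bit decoded by bounded-distance decoding of the
even-weight subcode remains in error given it was in error and `i` of the other
`n−1` positions are in error. -/
noncomputable def Ptil (t n i : ℕ) : ℝ :=
  if i < t then 0
  else if i ≤ n - t - 2 then
    1 - ∑ δ ∈ Icc 1 t, ∑ j ∈ range δ,
      (((n : ℝ) - (ell i δ j : ℝ)) / (n : ℝ)) * Atil t n (ell i δ j) * V n i δ j
  else 1

/-! Writing `k = δ - 1 - j`, the trinomial identity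
`C(n-1, ℓ) C(ℓ, j) C(n-1-ℓ, k) = C(n-1, i) C(i, k) C(n-1-i, j)` together with
`(n - ℓ) C(n, ℓ) = n C(n-1, ℓ)` collapses each summand of `P̃_n(i)` (with `Ã` replaced by the
larger `Â`) to `C(i, k) C(n-1-i, j) / (n+1)^t ≤ (n+1)^(δ-1) / (n+1)^t ≤ 1/(n+1)`.
Hence `1 - t²/(n+1) ≤ P̃_n(i) ≤ 1` whenever `t ≤ i`. -/

-- Both sides are the multinomial coefficient `(a+j+k+r)! / (a! j! k! r!)`.
theorem Nat.choose_mul_choose_mul_choose_comm (a j k r : ℕ) :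
    (a + j + (k + r)).choose (a + j) * (a + j).choose j * (k + r).choose k =
      (a + k + (j + r)).choose (a + k) * (a + k).choose k * (j + r).choose j := by
  rw [← Nat.choose_symm_add (a := a) (b := j), ← Nat.choose_symm_add (a := a) (b := k)]
  apply Nat.cast_injective (R := ℚ)
  simp only [Nat.cast_mul, Nat.cast_add_choose]
  rw [show a + k + (j + r) = a + j + (k + r) by ring]
  field_simp

theorem Nat.cast_sub_mul_choose {R : Type*} [CommRing R] {n l : ℕ} (hn : 0 < n) (hl : l ≤ n) :
    ((n : R) - l) * n.choose l = n * (n - 1).choose l := by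
  obtain ⟨m, rfl⟩ : ∃ m, n = m + 1 := ⟨n - 1, by omega⟩
  have h := Nat.choose_mul_succ_eq m l
  rw [← Nat.cast_sub hl, Nat.add_sub_cancel, ← Nat.cast_mul, ← Nat.cast_mul]
  exact congrArg _ (by linarith [h])

lemma choose_ell_mul {n i δ j : ℕ} (hjδ : j < δ) (hδi : δ ≤ i) (hin : i + j < n) :
    (n - 1).choose (ell i δ j) * (ell i δ j).choose j * (n - ell i δ j - 1).choose (δ - 1 - j) =
      (n - 1).choose i * i.choose (δ - 1 - j) * (n - 1 - i).choose j := by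
  convert Nat.choose_mul_choose_mul_choose_comm (i - (δ - 1 - j)) j (δ - 1 - j) (n - 1 - i - j)
    using 4 <;> first | omega | (simp only [ell]; omega)

noncomputable def miscorrectionTerm (t n i δ j : ℕ) : ℝ :=
  ((n : ℝ) - ell i δ j) / n * Atil t n (ell i δ j) * V n i δ j

section miscorrectionTerm

variable {t n i δ j : ℕ}

lemma Ptil_eq_one_sub_sum (hti : t ≤ i) (hin : i ≤ n - t - 2) :
    Ptil t n i = 1 - ∑ δ ∈ Icc 1 t, ∑ j ∈ range δ, miscorrectionTerm t n i δ j := by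
  rw [Ptil, if_neg (by omega), if_pos hin]
  rfl

lemma Ptil_eq_one (hti : t ≤ i) (hin : n - t - 2 < i) : Ptil t n i = 1 := by
  rw [Ptil, if_neg (by omega), if_neg (by omega)]

lemma sub_ell_div_mul_Ahat_mul_V (hjδ : j < δ) (hδi : δ ≤ i) (hin : i + j < n) :
    ((n : ℝ) - ell i δ j) / n * Ahat t n (ell i δ j) * V n i δ j =
      (i.choose (δ - 1 - j) * (n - 1 - i).choose j : ℝ) / ((n : ℝ) + 1) ^ t := by
  have hn : 0 < n := by omega
  have hl : ell i δ j ≤ n := by unfold ell; omega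
  have hC : ((n - 1).choose i : ℝ) ≠ 0 := by exact_mod_cast (Nat.choose_pos (by omega)).ne'
  have key := congrArg (Nat.cast (R := ℝ)) (choose_ell_mul hjδ hδi hin)
  push_cast at key
  unfold Ahat V
  rw [Nat.choose_symm (by unfold ell; omega), zpow_neg, zpow_natCast]
  field_simp
  rw [Nat.cast_sub_mul_choose hn hl]
  linear_combination (n : ℝ) * key

lemma Atil_nonneg (l : ℕ) : 0 ≤ Atil t n l := by
  unfold Atil Ahat
  split_ifs <;> positivity

lemma Atil_le_Ahat (l : ℕ) : Atil t n l ≤ Ahat t n l := by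
  unfold Atil
  split_ifs
  · exact le_rfl
  · unfold Ahat; positivity

lemma miscorrectionTerm_nonneg (hl : ell i δ j ≤ n) : 0 ≤ miscorrectionTerm t n i δ j := by
  have : (0 : ℝ) ≤ n - ell i δ j := sub_nonneg.2 (by exact_mod_cast hl)
  unfold miscorrectionTerm V
  have := Atil_nonneg (t := t) (n := n) (ell i δ j)
  positivity

lemma miscorrectionTerm_le (hδt : δ ≤ t) (hjδ : j < δ) (hδi : δ ≤ i) (hin : i + j < n) :
    miscorrectionTerm t n i δ j ≤ 1 / ((n : ℝ) + 1) := by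
  have hn : (1 : ℝ) ≤ n + 1 := by simp
  have hl : (ell i δ j : ℝ) ≤ n := by unfold ell; exact_mod_cast (by omega)
  have hchoose : (i.choose (δ - 1 - j) * (n - 1 - i).choose j : ℝ) ≤ ((n : ℝ) + 1) ^ (t - 1) :=
    calc (i.choose (δ - 1 - j) * (n - 1 - i).choose j : ℝ)
        ≤ ((n : ℝ) + 1) ^ (δ - 1 - j) * ((n : ℝ) + 1) ^ j := by
          gcongr <;> exact_mod_cast (Nat.choose_le_pow _ _).trans (Nat.pow_le_pow_left (by omega) _)
      _ ≤ ((n : ℝ) + 1) ^ (t - 1) := by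
          rw [← pow_add]; exact pow_le_pow_right₀ hn (by omega)
  calc miscorrectionTerm t n i δ j
      ≤ ((n : ℝ) - ell i δ j) / n * Ahat t n (ell i δ j) * V n i δ j := by
        unfold miscorrectionTerm
        have : 0 ≤ V n i δ j := by unfold V; positivity
        gcongr
        exact Atil_le_Ahat _
    _ = (i.choose (δ - 1 - j) * (n - 1 - i).choose j : ℝ) / ((n : ℝ) + 1) ^ t :=
        sub_ell_div_mul_Ahat_mul_V hjδ hδi hin
    _ ≤ ((n : ℝ) + 1) ^ (t - 1) / ((n : ℝ) + 1) ^ t := by gcongr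
    _ = 1 / ((n : ℝ) + 1) := by
        rw [div_eq_div_iff (by positivity) (by positivity), one_mul, ← pow_succ,
          Nat.sub_add_cancel (by omega)]

lemma sum_miscorrectionTerm_le (hti : t ≤ i) (hin : i ≤ n - t - 2) :
    ∑ δ ∈ Icc 1 t, ∑ j ∈ range δ, miscorrectionTerm t n i δ j ≤ t ^ 2 / ((n : ℝ) + 1) :=
  calc ∑ δ ∈ Icc 1 t, ∑ j ∈ range δ, miscorrectionTerm t n i δ j
      ≤ ∑ δ ∈ Icc 1 t, (t : ℝ) / (n + 1) := by
        refine sum_le_sum fun δ hδ ↦ ?_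
        obtain ⟨hδ1, hδt⟩ := mem_Icc.1 hδ
        calc ∑ j ∈ range δ, miscorrectionTerm t n i δ j
            ≤ ∑ j ∈ range δ, 1 / ((n : ℝ) + 1) :=
              sum_le_sum fun j hj ↦ miscorrectionTerm_le hδt (mem_range.1 hj) (by omega)
                (by have := mem_range.1 hj; omega)
          _ = δ / ((n : ℝ) + 1) := by simp [div_eq_mul_inv]
          _ ≤ t / ((n : ℝ) + 1) := by gcongr
    _ = t ^ 2 / ((n : ℝ) + 1) := by simp; ring

lemma sum_miscorrectionTerm_nonneg (hti : t ≤ i) (hin : i ≤ n - t - 2) :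
    0 ≤ ∑ δ ∈ Icc 1 t, ∑ j ∈ range δ, miscorrectionTerm t n i δ j := by
  refine sum_nonneg fun δ hδ ↦ sum_nonneg fun j hj ↦ miscorrectionTerm_nonneg ?_
  simp only [mem_Icc, mem_range] at hδ hj
  unfold ell
  omega

end miscorrectionTerm

lemma Ptil_mem_Icc {t n i : ℕ} (hti : t ≤ i) :
    Ptil t n i ∈ Set.Icc (1 - t ^ 2 / ((n : ℝ) + 1)) 1 := by
  by_cases hin : i ≤ n - t - 2
  · rw [Ptil_eq_one_sub_sum hti hin]
    have := sum_miscorrectionTerm_le hti hin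
    have := sum_miscorrectionTerm_nonneg (n := n) hti hin
    constructor <;> linarith
  · rw [Ptil_eq_one hti (by omega)]
    constructor <;> simp only [sub_le_self_iff, le_refl]
    positivity

theorem stmt1_general (t : ℕ) (i : ℕ → ℕ)
    (hi : ∀ n, 4 * t + 4 < n → t ≤ i n ∧ i n ≤ n - 1) :
    Tendsto (fun n => Ptil t n (i n)) atTop (nhds 1) := by
  have hlower : Tendsto (fun n : ℕ ↦ 1 - t ^ 2 / ((n : ℝ) + 1)) atTop (nhds 1) := by
    simpa [div_eq_mul_inv] using
      tendsto_const_nhds.sub (tendsto_one_div_add_atTop_nhds_zero_nat.const_mul ((t : ℝ) ^ 2))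
  have hbounds : ∀ᶠ n : ℕ in atTop, Ptil t n (i n) ∈ Set.Icc (1 - t ^ 2 / ((n : ℝ) + 1)) 1 :=
    (eventually_gt_atTop (4 * t + 4)).mono fun n hn ↦ Ptil_mem_Icc (hi n hn).1
  exact tendsto_of_tendsto_of_tendsto_of_le_of_le' hlower tendsto_const_nhds
    (hbounds.mono fun _ h ↦ h.1) (hbounds.mono fun _ h ↦ h.2)

/-- for `t ≥ 2` and any sequence `i_n` with `t ≤ i_n ≤ n−1`,
`lim_{n→∞} P̃_n(i_n) = 1`. -/
theorem stmt1 (t : ℕ) (ht : 2 ≤ t) (i : ℕ → ℕ)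
    (hi : ∀ n, 4 * t + 4 < n → t ≤ i n ∧ i n ≤ n - 1) :
    Tendsto (fun n => Ptil t n (i n)) atTop (nhds 1) :=
  stmt1_general t i hi
end

section
/- For every integer t ≥ 2, the high-rate potential threshold of iterative hard-decision decoding without miscorrection satisfies ρ̂_t** ≥ 2t−2, where ρ̂_t** = sup{ρ ∈ [0,∞) : U(λ;ρ) ≥ 0 for all λ ≥ 0}. -/
open Filter

/-- Poisson tail probability `φ(λ;k) = ∑_{i=k+1}^∞ (λ^i/i!)·e^{−λ}`. -/
noncomputable def phi (lam : ℝ) (k : ℕ) : ℝ :=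
  ∑' i : ℕ, if k + 1 ≤ i then lam ^ i / (Nat.factorial i : ℝ) * Real.exp (-lam) else 0

/-- Potential function of the high-rate scaling limit of density evolution for
iterative hard-decision decoding without miscorrection:
`U(λ;ρ) = ∫_0^λ (z − ρ·φ(z;t−1)) dz`. -/
noncomputable def U (t : ℕ) (lam ρ : ℝ) : ℝ :=
  ∫ z in (0 : ℝ)..lam, (z - ρ * phi z (t - 1))

/-- High-rate potential threshold of iterative hard-decision decoding without
miscorrection: `ρ̂_t** = sup{ρ ∈ [0,∞) : U(λ;ρ) ≥ 0 for all λ ≥ 0}`. -/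
noncomputable def rhoHatStarStar (t : ℕ) : ℝ :=
  sSup {ρ : ℝ | 0 ≤ ρ ∧ ∀ lam : ℝ, 0 ≤ lam → 0 ≤ U t lam ρ}

/-!
For `X ~ Poisson(λ)` one has `d/dλ E[(X - t)⁺] = P(X ≥ t) = φ(λ; t - 1)`, so
`U(λ; ρ) = λ²/2 - ρ E[(X - t)⁺]`. By AM-GM, `4(t - 1)(n - t)⁺ ≤ (n - 1)² ≤ n(n - 1)`, and
`E[X(X - 1)] = λ²`; hence `4(t - 1) E[(X - t)⁺] ≤ λ²`, i.e. `ρ = 2t - 2` keeps `U ≥ 0`.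
The admissible set of `ρ` is bounded (take `λ = t + 1`), so its supremum is at least `2t - 2`.
-/

open Finset Real
open scoped Nat

theorem hasSum_descFactorial_mul_pow_div_factorial (k : ℕ) (x : ℝ) :
    HasSum (fun n : ℕ => (n.descFactorial k : ℝ) * x ^ n / n !) (x ^ k * exp x) := by
  rw [← hasSum_nat_add_iff' k]
  have hhead : ∑ i ∈ range k, (i.descFactorial k : ℝ) * x ^ i / i ! = 0 :=
    sum_eq_zero fun i hi => by simp [Nat.descFactorial_eq_zero_iff_lt.mpr (mem_range.mp hi)]
  rw [hhead, sub_zero, exp_eq_exp_ℝ]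
  refine ((NormedSpace.expSeries_div_hasSum_exp x).mul_left (x ^ k)).congr_fun fun n => ?_
  have hfact : ((n + k)! : ℝ) = n ! * (n + k).descFactorial k := by
    have := Nat.factorial_mul_descFactorial (Nat.le_add_left k n)
    rw [Nat.add_sub_cancel] at this
    exact_mod_cast this.symm
  have hD : ((n + k).descFactorial k : ℝ) ≠ 0 :=
    Nat.cast_ne_zero.mpr (Nat.descFactorial_eq_zero_iff_lt.not.mpr (by omega))
  rw [hfact, pow_add]
  field_simp

theorem hasSum_poisson_pmf (z : ℝ) : HasSum (fun i : ℕ => z ^ i / i ! * exp (-z)) 1 := by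
  simpa [← exp_add] using (hasSum_descFactorial_mul_pow_div_factorial 0 z).mul_right (exp (-z))

theorem hasSum_phi (z : ℝ) (k : ℕ) :
    HasSum (fun i : ℕ => if k + 1 ≤ i then z ^ i / i ! * exp (-z) else 0)
      (1 - ∑ i ∈ range (k + 1), z ^ i / i ! * exp (-z)) := by
  have hhead : HasSum (fun i : ℕ => if i < k + 1 then z ^ i / i ! * exp (-z) else 0)
      (∑ i ∈ range (k + 1), z ^ i / i ! * exp (-z)) := by
    rw [← sum_congr rfl fun i hi => if_pos (mem_range.mp hi)]
    exact hasSum_sum_of_ne_finset_zero fun i hi => if_neg (by simpa using hi)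
  refine ((hasSum_poisson_pmf z).sub hhead).congr_fun fun i => ?_
  split_ifs <;> first | omega | ring

theorem phi_eq_one_sub (z : ℝ) (k : ℕ) :
    phi z k = 1 - ∑ i ∈ range (k + 1), z ^ i / i ! * exp (-z) :=
  (hasSum_phi z k).tsum_eq

theorem phi_succ (z : ℝ) (k : ℕ) :
    phi z (k + 1) = phi z k - z ^ (k + 1) / (k + 1)! * exp (-z) := by
  rw [phi_eq_one_sub, phi_eq_one_sub, sum_range_succ _ (k + 1)]
  ring

theorem hasDerivAt_pow_div_factorial_succ (k : ℕ) (z : ℝ) :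
    HasDerivAt (fun z : ℝ => z ^ (k + 1) / (k + 1)!) (z ^ k / k !) z := by
  refine ((hasDerivAt_pow (k + 1) z).div_const ((k + 1)! : ℝ)).congr_deriv ?_
  rw [Nat.factorial_succ]
  push_cast
  field_simp

theorem hasDerivAt_phi (k : ℕ) (z : ℝ) :
    HasDerivAt (fun z => phi z k) (z ^ k / k ! * exp (-z)) z := by
  have hexp : HasDerivAt (fun z => exp (-z)) (-exp (-z)) z := by
    simpa using (hasDerivAt_neg z).exp
  induction k with
  | zero =>
    simp only [phi_eq_one_sub, zero_add, sum_range_one, pow_zero, Nat.factorial_zero,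
      Nat.cast_one, div_one, one_mul]
    simpa using hexp.const_sub 1
  | succ k ih =>
    simp only [phi_succ]
    refine (ih.sub ((hasDerivAt_pow_div_factorial_succ k z).mul hexp)).congr_deriv ?_
    ring

theorem continuous_phi (k : ℕ) : Continuous fun z => phi z k :=
  continuous_iff_continuousAt.2 fun z => (hasDerivAt_phi k z).continuousAt

theorem phi_zero_left (k : ℕ) : phi 0 k = 0 := by
  simp [phi_eq_one_sub, sum_range_succ']

theorem phi_le_one {z : ℝ} (hz : 0 ≤ z) (k : ℕ) : phi z k ≤ 1 := by
  rw [phi_eq_one_sub, sub_le_self_iff]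
  exact sum_nonneg fun i _ => by positivity

/-- `E[(X - t)⁺]` for `X ~ Poisson(λ)`, written through `E[min(X, t)] = ∑_{i<t} P(X > i)`. -/
noncomputable def poissonExcess (t : ℕ) (lam : ℝ) : ℝ :=
  lam - ∑ i ∈ range t, phi lam i

theorem integral_phi (k : ℕ) (lam : ℝ) :
    ∫ z in (0 : ℝ)..lam, phi z k = poissonExcess (k + 1) lam := by
  have hderiv (z : ℝ) : HasDerivAt (poissonExcess (k + 1)) (phi z k) z := by
    refine ((hasDerivAt_id z).sub
      (HasDerivAt.fun_sum fun i _ => hasDerivAt_phi i z)).congr_deriv ?_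
    rw [phi_eq_one_sub]
  rw [intervalIntegral.integral_eq_sub_of_hasDerivAt (fun z _ => hderiv z)
    ((continuous_phi k).intervalIntegrable _ _)]
  simp [poissonExcess, phi_zero_left]

theorem U_eq_poissonExcess {t : ℕ} (ht : 1 ≤ t) (lam ρ : ℝ) :
    U t lam ρ = lam ^ 2 / 2 - ρ * poissonExcess t lam := by
  obtain ⟨k, rfl⟩ : ∃ k, t = k + 1 := ⟨t - 1, by omega⟩
  rw [U, intervalIntegral.integral_sub intervalIntegral.intervalIntegrable_id
    (((continuous_phi _).const_mul ρ).intervalIntegrable _ _), integral_id,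
    intervalIntegral.integral_const_mul, Nat.add_sub_cancel, integral_phi]
  ring

theorem hasSum_poissonExcess (t : ℕ) (lam : ℝ) :
    HasSum (fun n : ℕ => ((n - t : ℕ) : ℝ) * (lam ^ n / n ! * exp (-lam)))
      (poissonExcess t lam) := by
  induction t with
  | zero =>
    simpa [poissonExcess, mul_div_assoc, mul_assoc, ← exp_add] using
      (hasSum_descFactorial_mul_pow_div_factorial 1 lam).mul_right (exp (-lam))
  | succ t ih =>
    have hphi := hasSum_phi lam t
    rw [← phi_eq_one_sub] at hphi
    have hstep : poissonExcess (t + 1) lam = poissonExcess t lam - phi lam t := by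
      rw [poissonExcess, poissonExcess, sum_range_succ]
      ring
    rw [hstep]
    refine (ih.sub hphi).congr_fun fun n => ?_
    split_ifs with h
    · rw [Nat.sub_succ', Nat.cast_sub (by omega)]
      ring
    · simp [Nat.sub_eq_zero_of_le (show n ≤ t by omega),
        Nat.sub_eq_zero_of_le (show n ≤ t + 1 by omega)]

theorem four_mul_sub_le_descFactorial_two (t n : ℕ) :
    4 * (t - 1) * (n - t) ≤ n.descFactorial 2 := by
  rcases le_or_gt n t with hnt | htn
  · simp [Nat.sub_eq_zero_of_le hnt]
  rcases Nat.eq_zero_or_pos t with rfl | ht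
  · simp
  have hsplit : n - 1 = (t - 1) + (n - t) := by omega
  calc 4 * (t - 1) * (n - t) ≤ (n - 1) ^ 2 := hsplit ▸ four_mul_le_sq_add _ _
    _ ≤ n * (n - 1) := by rw [sq]; exact Nat.mul_le_mul_right _ (Nat.sub_le n 1)
    _ = n.descFactorial 2 := by simp [Nat.descFactorial, mul_comm]

theorem four_mul_poissonExcess_le {t : ℕ} (ht : 1 ≤ t) {lam : ℝ} (hlam : 0 ≤ lam) :
    4 * ((t : ℝ) - 1) * poissonExcess t lam ≤ lam ^ 2 := by
  have hterm (n : ℕ) : 4 * ((t : ℝ) - 1) * (((n - t : ℕ) : ℝ) * (lam ^ n / n ! * exp (-lam)))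
      ≤ n.descFactorial 2 * lam ^ n / n ! * exp (-lam) := by
    have key := Nat.cast_le (α := ℝ) |>.mpr (four_mul_sub_le_descFactorial_two t n)
    push_cast [Nat.cast_sub ht] at key
    rw [← mul_assoc, mul_div_assoc, mul_assoc _ (_ / _)]
    exact mul_le_mul_of_nonneg_right key (by positivity)
  have h := hasSum_le hterm ((hasSum_poissonExcess t lam).mul_left _)
    ((hasSum_descFactorial_mul_pow_div_factorial 2 lam).mul_right (exp (-lam)))
  rwa [mul_assoc (lam ^ 2), ← exp_add, add_neg_cancel, exp_zero, mul_one] at h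

theorem sub_le_poissonExcess (t : ℕ) {lam : ℝ} (hlam : 0 ≤ lam) :
    lam - t ≤ poissonExcess t lam := by
  have : ∑ i ∈ range t, phi lam i ≤ t := by
    simpa using sum_le_sum fun i (_ : i ∈ range t) => phi_le_one hlam i
  rw [poissonExcess]
  linarith

/-- for every integer `t ≥ 2`, `ρ̂_t** ≥ 2t−2`. -/
theorem stmt9 (t : ℕ) (ht : 2 ≤ t) :
    2 * (t : ℝ) - 2 ≤ rhoHatStarStar t := by
  have hU := U_eq_poissonExcess (t := t) (by omega)
  have ht' : (2 : ℝ) ≤ t := by exact_mod_cast ht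
  have hbdd : BddAbove {ρ : ℝ | 0 ≤ ρ ∧ ∀ lam : ℝ, 0 ≤ lam → 0 ≤ U t lam ρ} := by
    refine ⟨((t : ℝ) + 1) ^ 2 / 2, fun ρ ⟨hρ, hUρ⟩ => ?_⟩
    have hUt := hUρ (t + 1) (by positivity)
    have hexcess := sub_le_poissonExcess t (show (0 : ℝ) ≤ t + 1 by positivity)
    rw [hU] at hUt
    nlinarith
  refine le_csSup hbdd ⟨by linarith, fun lam hlam => ?_⟩
  rw [hU]
  linarith [four_mul_poissonExcess_le (t := t) (by omega) hlam]
end
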